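/- arXiv:hep-th/9308148 — 2 statements merged into one kernel-verified Lean document; each statement's English description precedes it below -/
import Mathlib

section
/- Let R be an invertible n²×n² matrix over a field k satisfying the quantum Yang–Baxter equation. Then the n⁴×n⁴ multi-index matrices 𝐑 and 𝐑' built from R satisfy the mixed Yang–Baxter relation 𝐑'₁₂𝐑₁₃𝐑₂₃ = 𝐑₂₃𝐑₁₃𝐑'₁₂ (as matrices acting on the threefold tensor power of the n²-dimensional multi-index space). -/
open Matrix

/-- `A` acting in the 1st and 2nd tensor factors of the threefold tensor power. -/
def lift12 {k : Type*} [Field k] {ι : Type*} [DecidableEq ι]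
    (A : Matrix (ι × ι) (ι × ι) k) : Matrix (ι × ι × ι) (ι × ι × ι) k :=
  fun p q => A (p.1, p.2.1) (q.1, q.2.1) * (if p.2.2 = q.2.2 then 1 else 0)

/-- `A` acting in the 1st and 3rd tensor factors of the threefold tensor power. -/
def lift13 {k : Type*} [Field k] {ι : Type*} [DecidableEq ι]
    (A : Matrix (ι × ι) (ι × ι) k) : Matrix (ι × ι × ι) (ι × ι × ι) k :=
  fun p q => A (p.1, p.2.2) (q.1, q.2.2) * (if p.2.1 = q.2.1 then 1 else 0)

/-- `A` acting in the 2nd and 3rd tensor factors of the threefold tensor power. -/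
def lift23 {k : Type*} [Field k] {ι : Type*} [DecidableEq ι]
    (A : Matrix (ι × ι) (ι × ι) k) : Matrix (ι × ι × ι) (ι × ι × ι) k :=
  fun p q => A (p.2.1, p.2.2) (q.2.1, q.2.2) * (if p.1 = q.1 then 1 else 0)

/-- The quantum Yang–Baxter equation `R₁₂R₁₃R₂₃ = R₂₃R₁₃R₁₂`. -/
def QYBE {k : Type*} [Field k] {ι : Type*} [DecidableEq ι] [Fintype ι]
    (R : Matrix (ι × ι) (ι × ι) k) : Prop :=
  lift12 R * lift13 R * lift23 R = lift23 R * lift13 R * lift12 R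

/-- The multi-index braiding matrix `𝐑^A_I{}^B_J = R^{j₀}_{b₀}{}^{i₀}_{a₀} ·
R^{a₁}_{i₁}{}^{b₁}_{j₁}`, rows indexed by `(A,B)`, columns by `(I,J)`,
where `R^i_j{}^k_l = R (i,k) (j,l)`. -/
def bigR {k : Type*} [Field k] {n : ℕ}
    (R : Matrix (Fin n × Fin n) (Fin n × Fin n) k) :
    Matrix ((Fin n × Fin n) × (Fin n × Fin n)) ((Fin n × Fin n) × (Fin n × Fin n)) k :=
  fun p q => R (q.2.1, q.1.1) (p.2.1, p.1.1) * R (p.1.2, p.2.2) (q.1.2, q.2.2)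

/-- The multi-index relation matrix `𝐑'^A_I{}^B_J = (R⁻¹)^{i₀}_{a₀}{}^{j₀}_{b₀} ·
R^{a₁}_{i₁}{}^{b₁}_{j₁}`, rows indexed by `(A,B)`, columns by `(I,J)`. -/
def bigR' {k : Type*} [Field k] {n : ℕ}
    (R Rinv : Matrix (Fin n × Fin n) (Fin n × Fin n) k) :
    Matrix ((Fin n × Fin n) × (Fin n × Fin n)) ((Fin n × Fin n) × (Fin n × Fin n)) k :=
  fun p q => Rinv (q.1.1, q.2.1) (p.1.1, p.2.1) * R (p.1.2, p.2.2) (q.1.2, q.2.2)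

open Kronecker

set_option linter.unusedSectionVars false
set_option linter.unreachableTactic false
set_option linter.unusedTactic false

section Aux
variable {k : Type*} [Field k] {ι : Type*} [DecidableEq ι] [Fintype ι]

def swapM (M : Matrix (ι × ι) (ι × ι) k) : Matrix (ι × ι) (ι × ι) k :=
  fun u v => M (u.2, u.1) (v.2, v.1)

@[simp] lemma swapM_swapM (M : Matrix (ι × ι) (ι × ι) k) : swapM (swapM M) = M := rfl

def sw12 : (ι × ι × ι) ≃ (ι × ι × ι) :=
  ⟨fun p => (p.2.1, p.1, p.2.2), fun p => (p.2.1, p.1, p.2.2),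
   fun ⟨_, _, _⟩ => rfl, fun ⟨_, _, _⟩ => rfl⟩

def rev : (ι × ι × ι) ≃ (ι × ι × ι) :=
  ⟨fun p => (p.2.2, p.2.1, p.1), fun p => (p.2.2, p.2.1, p.1),
   fun ⟨_, _, _⟩ => rfl, fun ⟨_, _, _⟩ => rfl⟩

lemma c12sw (M : Matrix (ι × ι) (ι × ι) k) :
    (lift12 M).submatrix sw12 sw12 = lift12 (swapM M) := rfl
lemma c13sw (M : Matrix (ι × ι) (ι × ι) k) :
    (lift13 M).submatrix sw12 sw12 = lift23 M := rfl
lemma c23sw (M : Matrix (ι × ι) (ι × ι) k) :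
    (lift23 M).submatrix sw12 sw12 = lift13 M := rfl
lemma c12rev (M : Matrix (ι × ι) (ι × ι) k) :
    (lift12 M).submatrix rev rev = lift23 (swapM M) := rfl
lemma c13rev (M : Matrix (ι × ι) (ι × ι) k) :
    (lift13 M).submatrix rev rev = lift13 (swapM M) := rfl
lemma c23rev (M : Matrix (ι × ι) (ι × ι) k) :
    (lift23 M).submatrix rev rev = lift12 (swapM M) := rfl

lemma lift12_transpose (M : Matrix (ι × ι) (ι × ι) k) :
    lift12 Mᵀ = (lift12 M)ᵀ := by
  ext ⟨a, b, c⟩ ⟨p, q, r⟩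
  simp [lift12, transpose_apply, eq_comm]

lemma lift13_transpose (M : Matrix (ι × ι) (ι × ι) k) :
    lift13 Mᵀ = (lift13 M)ᵀ := by
  ext ⟨a, b, c⟩ ⟨p, q, r⟩
  simp [lift13, transpose_apply, eq_comm]

lemma lift23_transpose (M : Matrix (ι × ι) (ι × ι) k) :
    lift23 Mᵀ = (lift23 M)ᵀ := by
  ext ⟨a, b, c⟩ ⟨p, q, r⟩
  simp [lift23, transpose_apply, eq_comm]

def eA : (ι × ι × ι) ≃ ((ι × ι) × ι) := (Equiv.prodAssoc ι ι ι).symm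

lemma lift12_eq (M : Matrix (ι × ι) (ι × ι) k) :
    lift12 M = (M ⊗ₖ (1 : Matrix ι ι k)).submatrix eA eA := by
  ext ⟨a, b, c⟩ ⟨p, q, r⟩
  simp [lift12, eA, Equiv.prodAssoc, Matrix.one_apply]

lemma lift12_mul (A B : Matrix (ι × ι) (ι × ι) k) :
    lift12 (A * B) = lift12 A * lift12 B := by
  rw [lift12_eq, lift12_eq, lift12_eq, ← Matrix.mul_one (1 : Matrix ι ι k),
    Matrix.mul_kronecker_mul, Matrix.mul_one]
  exact (Matrix.submatrix_mul_equiv _ _ _ eA _).symm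

lemma lift12_one : lift12 (1 : Matrix (ι × ι) (ι × ι) k) = 1 := by
  rw [lift12_eq, Matrix.one_kronecker_one, Matrix.submatrix_one_equiv]

lemma QYBE_transpose {R : Matrix (ι × ι) (ι × ι) k} (h : QYBE R) : QYBE Rᵀ := by
  unfold QYBE
  rw [lift12_transpose, lift13_transpose, lift23_transpose, ← Matrix.transpose_mul,
    ← Matrix.transpose_mul, ← Matrix.transpose_mul, ← Matrix.transpose_mul]
  exact congrArg Matrix.transpose
    (by rw [← Matrix.mul_assoc, ← Matrix.mul_assoc]; exact h.symm)

lemma QYBE_swapM {U : Matrix (ι × ι) (ι × ι) k} (h : QYBE U) : QYBE (swapM U) := by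
  unfold QYBE at h ⊢
  have := congrArg (fun M : Matrix (ι × ι × ι) (ι × ι × ι) k => M.submatrix rev rev) h
  simp only [← Matrix.submatrix_mul_equiv _ _ _ (rev (ι := ι)) _] at this
  rw [c12rev, c13rev, c23rev] at this
  exact this.symm

/-- The mixed relation on the "0" components: from QYBE for `V := swapM U`, conjugating
by `sw12`. -/
lemma mixed_aux {U : Matrix (ι × ι) (ι × ι) k} (h : QYBE U) :
    lift12 U * lift23 (swapM U) * lift13 (swapM U) =
      lift13 (swapM U) * lift23 (swapM U) * lift12 U := by
  have hV := QYBE_swapM h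
  unfold QYBE at hV
  have := congrArg (fun M : Matrix (ι × ι × ι) (ι × ι × ι) k => M.submatrix sw12 sw12) hV
  simp only [← Matrix.submatrix_mul_equiv _ _ _ (sw12 (ι := ι)) _] at this
  rw [c12sw, c13sw, c23sw, swapM_swapM] at this
  exact this

lemma claim0 {U W : Matrix (ι × ι) (ι × ι) k} (hUW : U * W = 1) (hWU : W * U = 1)
    (h : QYBE U) :
    lift12 W * lift13 (swapM U) * lift23 (swapM U) =
      lift23 (swapM U) * lift13 (swapM U) * lift12 W := by
  have key := mixed_aux h
  have h1 : lift12 U * lift12 W = (1 : Matrix (ι × ι × ι) (ι × ι × ι) k) := by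
    rw [← lift12_mul, hUW, lift12_one]
  have h2 : lift12 W * lift12 U = (1 : Matrix (ι × ι × ι) (ι × ι × ι) k) := by
    rw [← lift12_mul, hWU, lift12_one]
  set V := swapM U with hV
  calc lift12 W * lift13 V * lift23 V
      = lift12 W * ((lift13 V * lift23 V * lift12 U) * lift12 W) := by
        simp only [Matrix.mul_assoc, h1, Matrix.mul_one]
    _ = lift12 W * ((lift12 U * lift23 V * lift13 V) * lift12 W) := by rw [← key]
    _ = lift23 V * lift13 V * lift12 W := by
        simp only [← Matrix.mul_assoc]; rw [h2, Matrix.one_mul]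
def E {ι : Type*} : ((ι × ι) × (ι × ι) × (ι × ι)) ≃ ((ι × ι × ι) × (ι × ι × ι)) :=
  ⟨fun p => ((p.1.1, p.2.1.1, p.2.2.1), (p.1.2, p.2.1.2, p.2.2.2)),
   fun q => ((q.1.1, q.2.1), (q.1.2.1, q.2.2.1), (q.1.2.2, q.2.2.2)),
   fun ⟨⟨_, _⟩, ⟨_, _⟩, ⟨_, _⟩⟩ => rfl, fun ⟨⟨_, _, _⟩, ⟨_, _, _⟩⟩ => rfl⟩

def bigOf (K L : Matrix (ι × ι × ι) (ι × ι × ι) k) :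
    Matrix ((ι × ι) × (ι × ι) × (ι × ι)) ((ι × ι) × (ι × ι) × (ι × ι)) k :=
  (K ⊗ₖ L).submatrix E E

lemma bigOf_mul (K L K' L' : Matrix (ι × ι × ι) (ι × ι × ι) k) :
    bigOf K L * bigOf K' L' = bigOf (K * K') (L * L') := by
  unfold bigOf
  rw [Matrix.submatrix_mul_equiv _ _ _ E _, Matrix.mul_kronecker_mul]

end Aux

section Fact
variable {k : Type*} [Field k] {n : ℕ} (R Rinv : Matrix (Fin n × Fin n) (Fin n × Fin n) k)

lemma fact12' : lift12 (bigR' R Rinv) = bigOf (lift12 Rinvᵀ) (lift12 R) := by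
  ext ⟨⟨a0, a1⟩, ⟨b0, b1⟩, ⟨c0, c1⟩⟩ ⟨⟨p0, p1⟩, ⟨q0, q1⟩, ⟨r0, r1⟩⟩
  by_cases h1 : c0 = r0 <;> by_cases h2 : c1 = r1 <;>
    simp [lift12, bigR', bigOf, E, Prod.ext_iff, h1, h2] <;> ring

lemma fact13 : lift13 (bigR R) = bigOf (lift13 (swapM Rᵀ)) (lift13 R) := by
  ext ⟨⟨a0, a1⟩, ⟨b0, b1⟩, ⟨c0, c1⟩⟩ ⟨⟨p0, p1⟩, ⟨q0, q1⟩, ⟨r0, r1⟩⟩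
  by_cases h1 : b0 = q0 <;> by_cases h2 : b1 = q1 <;>
    simp [lift13, bigR, bigOf, swapM, E, Prod.ext_iff, h1, h2] <;> ring

lemma fact23 : lift23 (bigR R) = bigOf (lift23 (swapM Rᵀ)) (lift23 R) := by
  ext ⟨⟨a0, a1⟩, ⟨b0, b1⟩, ⟨c0, c1⟩⟩ ⟨⟨p0, p1⟩, ⟨q0, q1⟩, ⟨r0, r1⟩⟩
  by_cases h1 : a0 = p0 <;> by_cases h2 : a1 = p1 <;>
    simp [lift23, bigR, bigOf, swapM, E, Prod.ext_iff, h1, h2] <;> ring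

end Fact

/-- If `R` is invertible and satisfies the QYBE, then the multi-index matrices satisfy
the mixed Yang–Baxter relation `𝐑'₁₂𝐑₁₃𝐑₂₃ = 𝐑₂₃𝐑₁₃𝐑'₁₂`. -/
theorem bigR_mixed_QYBE_two
    {k : Type*} [Field k] {n : ℕ}
    (R Rinv : Matrix (Fin n × Fin n) (Fin n × Fin n) k)
    (hinv : R * Rinv = 1) (hinv' : Rinv * R = 1)
    (hQYBE : QYBE R) :
    lift12 (bigR' R Rinv) * lift13 (bigR R) * lift23 (bigR R) =
      lift23 (bigR R) * lift13 (bigR R) * lift12 (bigR' R Rinv) := by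
  have hUW : Rᵀ * Rinvᵀ = (1 : Matrix (Fin n × Fin n) (Fin n × Fin n) k) := by
    rw [← Matrix.transpose_mul, hinv', Matrix.transpose_one]
  have hWU : Rinvᵀ * Rᵀ = (1 : Matrix (Fin n × Fin n) (Fin n × Fin n) k) := by
    rw [← Matrix.transpose_mul, hinv, Matrix.transpose_one]
  have h0 := claim0 hUW hWU (QYBE_transpose hQYBE)
  have hQ : lift12 R * lift13 R * lift23 R = lift23 R * lift13 R * lift12 R := hQYBE
  rw [fact12', fact13, fact23, bigOf_mul, bigOf_mul, bigOf_mul, bigOf_mul, h0, hQ]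
end

section
/- Let R₁ be an invertible m²×m² matrix and R₂ an invertible n²×n² matrix over a field k, both Hecke with the same parameter q. For multi-indices I = (i₀,i₁) with i₀ ∈ {1,…,m}, i₁ ∈ {1,…,n}, define the (mn)²×(mn)² rectangular multi-index matrices 𝐑^A_I{}^B_J = (R₁)^{j₀}_{b₀}{}^{i₀}_{a₀} · (R₂)^{a₁}_{i₁}{}^{b₁}_{j₁} and 𝐑'^A_I{}^B_J = (R₁⁻¹)^{i₀}_{a₀}{}^{j₀}_{b₀} · (R₂)^{a₁}_{i₁}{}^{b₁}_{j₁}. Then (𝐏𝐑 + 1)(𝐏𝐑' − 1) = 0, where 𝐏 is the permutation matrix on the two multi-index tensor factors. (This is the Hecke-type covector condition making the rectangular quantum matrices A(R₁:R₂) a braided covector algebra, as used in Proposition 4.1.) -/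
open Matrix Kronecker

/-- The permutation matrix `P^i_j{}^k_l = δ^i_l δ^k_j` on any index type. -/
def permMat (k : Type*) [Field k] (ι : Type*) [DecidableEq ι] :
    Matrix (ι × ι) (ι × ι) k :=
  fun p q => if p.1 = q.2 ∧ p.2 = q.1 then 1 else 0

/-- The rectangular multi-index braiding matrix
`𝐑^A_I{}^B_J = (R₁)^{j₀}_{b₀}{}^{i₀}_{a₀} · (R₂)^{a₁}_{i₁}{}^{b₁}_{j₁}`,
rows indexed by `(A,B)`, columns by `(I,J)`, with multi-indices in `Fin m × Fin n`
and the convention `R^i_j{}^k_l = R (i,k) (j,l)`. -/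
def bigRrect {k : Type*} [Field k] {m n : ℕ}
    (R1 : Matrix (Fin m × Fin m) (Fin m × Fin m) k)
    (R2 : Matrix (Fin n × Fin n) (Fin n × Fin n) k) :
    Matrix ((Fin m × Fin n) × (Fin m × Fin n)) ((Fin m × Fin n) × (Fin m × Fin n)) k :=
  fun p q => R1 (q.2.1, q.1.1) (p.2.1, p.1.1) * R2 (p.1.2, p.2.2) (q.1.2, q.2.2)

/-- The rectangular multi-index relation matrix
`𝐑'^A_I{}^B_J = (R₁⁻¹)^{i₀}_{a₀}{}^{j₀}_{b₀} · (R₂)^{a₁}_{i₁}{}^{b₁}_{j₁}`. -/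
def bigR'rect {k : Type*} [Field k] {m n : ℕ}
    (R1inv : Matrix (Fin m × Fin m) (Fin m × Fin m) k)
    (R2 : Matrix (Fin n × Fin n) (Fin n × Fin n) k) :
    Matrix ((Fin m × Fin n) × (Fin m × Fin n)) ((Fin m × Fin n) × (Fin m × Fin n)) k :=
  fun p q => R1inv (q.1.1, q.2.1) (p.1.1, p.2.1) * R2 (p.1.2, p.2.2) (q.1.2, q.2.2)

section Aux

variable {k : Type*} [Field k] {ι : Type*} [DecidableEq ι] [Fintype ι]

lemma permMat_mul_apply (M : Matrix (ι × ι) (ι × ι) k) (p r : ι × ι) :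
    (permMat k ι * M) p r = M (p.2, p.1) r := by
  rw [Matrix.mul_apply, Fintype.sum_prod_type]
  simp [permMat, ite_and, ite_mul]

lemma mul_permMat_apply (M : Matrix (ι × ι) (ι × ι) k) (p r : ι × ι) :
    (M * permMat k ι) p r = M p (r.2, r.1) := by
  rw [Matrix.mul_apply, Fintype.sum_prod_type]
  simp [permMat, ite_and, mul_ite, eq_comm]

lemma permMat_mul_permMat : permMat k ι * permMat k ι = (1 : Matrix (ι × ι) (ι × ι) k) := by
  ext ⟨a, b⟩ ⟨i, j⟩
  rw [permMat_mul_apply]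
  simp [permMat, Matrix.one_apply, Prod.ext_iff, and_comm]

/-- index shuffling equivalence -/
def shuffleEquiv (m n : Type*) : ((m × n) × (m × n)) ≃ ((m × m) × (n × n)) where
  toFun p := ((p.1.1, p.2.1), (p.1.2, p.2.2))
  invFun p := ((p.1.1, p.2.1), (p.1.2, p.2.2))
  left_inv _ := rfl
  right_inv _ := rfl

end Aux

/-- If `R₁`, `R₂` are invertible and Hecke with the same parameter `q`, then the
rectangular multi-index matrices satisfy `(𝐏𝐑 + 1)(𝐏𝐑' − 1) = 0`, making
`A(R₁:R₂)` a braided covector algebra (used in Proposition 4.1). -/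
theorem rect_bigR_hecke_covector_condition
    {k : Type*} [Field k] {m n : ℕ}
    (R1 R1inv : Matrix (Fin m × Fin m) (Fin m × Fin m) k)
    (R2 R2inv : Matrix (Fin n × Fin n) (Fin n × Fin n) k)
    (h1 : R1 * R1inv = 1) (h1' : R1inv * R1 = 1)
    (h2 : R2 * R2inv = 1) (h2' : R2inv * R2 = 1)
    (q : k) (hq : q ≠ 0)
    (hHecke1 : (permMat k (Fin m) * R1 - q • 1) * (permMat k (Fin m) * R1 + q⁻¹ • 1) = 0)
    (hHecke2 : (permMat k (Fin n) * R2 - q • 1) * (permMat k (Fin n) * R2 + q⁻¹ • 1) = 0) :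
    (permMat k (Fin m × Fin n) * bigRrect R1 R2 + 1) *
      (permMat k (Fin m × Fin n) * bigR'rect R1inv R2 - 1) = 0 := by
  set P1 := permMat k (Fin m)
  set P2 := permMat k (Fin n)
  set c : k := q - q⁻¹ with hc
  set X : Matrix (Fin m × Fin m) (Fin m × Fin m) k := (P1 * R1)ᵀ with hX
  set X' : Matrix (Fin m × Fin m) (Fin m × Fin m) k := (R1inv * P1)ᵀ with hX'
  set Y : Matrix (Fin n × Fin n) (Fin n × Fin n) k := P2 * R2 with hY
  have hqq : q * q⁻¹ = 1 := mul_inv_cancel₀ hq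
  -- Hecke relations, expanded
  have hM2 : ∀ {ι : Type} [DecidableEq ι] [Fintype ι] (M : Matrix (ι × ι) (ι × ι) k),
      (M - q • 1) * (M + q⁻¹ • 1) = 0 → M * M = c • M + 1 := by
    intro ι _ _ M h
    have expand : (M - q • 1) * (M + q⁻¹ • 1) = M * M + q⁻¹ • M - q • M - 1 := by
      simp only [sub_mul, Matrix.mul_add, Matrix.add_mul, smul_mul_assoc, mul_smul_comm,
        Matrix.one_mul, Matrix.mul_one, smul_smul, hqq, one_smul, smul_add]
      abel
    rw [expand] at h
    apply eq_of_sub_eq_zero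
    rw [hc, sub_smul]
    calc M * M - (q • M - q⁻¹ • M + 1) = M * M + q⁻¹ • M - q • M - 1 := by abel
    _ = 0 := h
  have hPR1 : (P1 * R1) * (P1 * R1) = c • (P1 * R1) + 1 := hM2 _ hHecke1
  have hY2 : Y * Y = c • Y + 1 := hM2 _ hHecke2
  have hX2 : X * X = c • X + 1 := by
    rw [hX, ← transpose_mul, hPR1, transpose_add, transpose_smul, transpose_one]
  have hXX' : X * X' = 1 := by
    rw [hX, hX', ← transpose_mul, Matrix.mul_assoc, ← Matrix.mul_assoc P1,
      permMat_mul_permMat, Matrix.one_mul, h1', transpose_one]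
  have hX'X : X' * X = 1 := by
    rw [hX, hX', ← transpose_mul, Matrix.mul_assoc, ← Matrix.mul_assoc R1,
      h1, Matrix.one_mul, permMat_mul_permMat, transpose_one]
  have hX'eq : X' = X + (-c) • 1 := by
    have hx : X * (X + (-c) • 1) = 1 := by
      rw [Matrix.mul_add, hX2, Matrix.mul_smul, Matrix.mul_one, neg_smul]
      abel
    calc X' = X' * (X * (X + (-c) • 1)) := by rw [hx, Matrix.mul_one]
    _ = (X' * X) * (X + (-c) • 1) := by rw [Matrix.mul_assoc]
    _ = X + (-c) • 1 := by rw [hX'X, Matrix.one_mul]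
  -- the reindexing
  set e := shuffleEquiv (Fin m) (Fin n) with he
  have hA : permMat k (Fin m × Fin n) * bigRrect R1 R2 = (X ⊗ₖ Y).submatrix e e := by
    ext ⟨A, B⟩ ⟨I, J⟩
    rw [permMat_mul_apply]
    show bigRrect R1 R2 (B, A) (I, J)
      = (X ⊗ₖ Y) ((A.1, B.1), (A.2, B.2)) ((I.1, J.1), (I.2, J.2))
    rw [kroneckerMap_apply, hX, hY, transpose_apply, permMat_mul_apply, permMat_mul_apply]
    rfl
  have hB : permMat k (Fin m × Fin n) * bigR'rect R1inv R2 = (X' ⊗ₖ Y).submatrix e e := by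
    ext ⟨A, B⟩ ⟨I, J⟩
    rw [permMat_mul_apply]
    show bigR'rect R1inv R2 (B, A) (I, J)
      = (X' ⊗ₖ Y) ((A.1, B.1), (A.2, B.2)) ((I.1, J.1), (I.2, J.2))
    rw [kroneckerMap_apply, hX', hY, transpose_apply, mul_permMat_apply, permMat_mul_apply]
    rfl
  rw [hA, hB]
  have key : (X ⊗ₖ Y + 1) * (X' ⊗ₖ Y - 1) = 0 := by
    simp only [Matrix.add_mul, Matrix.mul_sub, Matrix.mul_one, Matrix.one_mul,
      ← mul_kronecker_mul]
    rw [hXX', hY2, hX'eq, add_kronecker, smul_kronecker, kronecker_add, kronecker_smul,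
      Matrix.one_kronecker_one, neg_smul]
    abel
  have hfac : ∀ (M N : Matrix ((Fin m × Fin m) × (Fin n × Fin n))
      ((Fin m × Fin m) × (Fin n × Fin n)) k),
      (M.submatrix e e + 1) * (N.submatrix e e - 1)
        = ((M + 1) * (N - 1)).submatrix e e := by
    intro M N
    rw [show M.submatrix e e + 1 = (M + 1).submatrix e e from by
        ext p r
        simp [Matrix.one_apply, EmbeddingLike.apply_eq_iff_eq],
      show N.submatrix e e - 1 = (N - 1).submatrix e e from by
        ext p r
        simp [Matrix.one_apply, EmbeddingLike.apply_eq_iff_eq],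
      Matrix.submatrix_mul_equiv]
  rw [hfac, key]
  rfl
end
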